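/- arXiv:2210.17510 — 3 statements merged into one kernel-verified Lean document; each statement's English description precedes it below -/
import Mathlib

section
/- Cancellation for the graviton–gauge-ghost vertex: let p, q₁, q₂ ∈ ℝ⁴ with p + q₁ + q₂ = 0. Then for every τ ∈ Fin 4: (p_μ δ^τ_ν + p_ν δ^τ_μ)((q₁·q₂) η^{μν} − q₁^μ q₂^ν − q₂^μ q₁^ν) = 2(q₁²·q₂^τ + q₂²·q₁^τ), summing over μ, ν; in particular this longitudinal contraction of the graviton–gauge-ghost vertex vanishes when q₁² = q₂² = 0 (massless on-shell ghosts). -/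
noncomputable section

set_option maxHeartbeats 1000000

/-- Minkowski metric components `η_{μν} = η^{μν} = diag(1, -1, -1, -1)`. -/
def η : Fin 4 → Fin 4 → ℝ := fun μ ν => if μ = ν then (if μ = 0 then 1 else -1) else 0

/-- Kronecker delta. -/
def δ : Fin 4 → Fin 4 → ℝ := fun μ ν => if μ = ν then 1 else 0

/-- Lowered index: `lo p μ = p_μ = η_{μν} p^ν`. -/
def lo (p : Fin 4 → ℝ) (μ : Fin 4) : ℝ := ∑ ν, η μ ν * p ν

/-- Minkowski inner product `p·q = η_{μν} p^μ q^ν`. -/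
def mdot (p q : Fin 4 → ℝ) : ℝ := ∑ μ, ∑ ν, η μ ν * p μ * q ν

lemma mdot_eq (p q : Fin 4 → ℝ) :
    mdot p q = p 0 * q 0 - p 1 * q 1 - p 2 * q 2 - p 3 * q 3 := by
  simp [mdot, η, Fin.sum_univ_four]; ring

lemma lo_eq0 (p : Fin 4 → ℝ) : lo p 0 = p 0 := by simp [lo, η, Fin.sum_univ_four]
lemma lo_eq1 (p : Fin 4 → ℝ) : lo p 1 = -p 1 := by simp [lo, η, Fin.sum_univ_four]
lemma lo_eq2 (p : Fin 4 → ℝ) : lo p 2 = -p 2 := by simp [lo, η, Fin.sum_univ_four]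
lemma lo_eq3 (p : Fin 4 → ℝ) : lo p 3 = -p 3 := by simp [lo, η, Fin.sum_univ_four]

/-- Cancellation for the graviton–gauge-ghost vertex: under momentum conservation, the
longitudinal contraction of the graviton leg equals `2(q₁² q₂^τ + q₂² q₁^τ)`, which vanishes
for massless on-shell ghosts. -/
theorem graviton_gauge_ghost_vertex_cancellation (p q₁ q₂ : Fin 4 → ℝ)
    (hmc : p + q₁ + q₂ = 0) (τ : Fin 4) :
    ∑ μ, ∑ ν, (lo p μ * δ τ ν + lo p ν * δ τ μ) *
        (mdot q₁ q₂ * η μ ν - q₁ μ * q₂ ν - q₂ μ * q₁ ν)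
      = 2 * (mdot q₁ q₁ * q₂ τ + mdot q₂ q₂ * q₁ τ) := by
  have hp : ∀ i, p i = -q₁ i - q₂ i := by
    intro i; have := congrFun hmc i; simp at this; linarith
  rw [mdot_eq q₁ q₁, mdot_eq q₂ q₂, mdot_eq q₁ q₂]
  fin_cases τ <;>
  · rw [Fin.sum_univ_four]
    simp only [Fin.sum_univ_four, lo_eq0, lo_eq1, lo_eq2, lo_eq3, η, δ, hp]
    simp (config := { decide := true })
    ring
end
end

section
/- For every p ∈ ℝ⁴ with p² ≠ 0, the tensors 𝒢 and 𝓛 are eigentensors of 𝕃, 𝕀 and 𝕋 with eigenvalues 1, 1 and 0 respectively: 𝕃^{ρσ}_{μν} 𝒢^κ_{ρσ} = 𝒢^κ_{μν}, 𝕃^{ρσ}_{μν} 𝓛^{μν}_λ = 𝓛^{ρσ}_λ, 𝕀^{ρσ}_{μν} 𝒢^κ_{ρσ} = 𝒢^κ_{μν}, 𝕀^{ρσ}_{μν} 𝓛^{μν}_λ = 𝓛^{ρσ}_λ, 𝕋^{ρσ}_{μν} 𝒢^κ_{ρσ} = 0 and 𝕋^{ρσ}_{μν} 𝓛^{μν}_λ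 = 0 (in each identity the repeated index pair is summed over Fin 4). -/
noncomputable section

/-- Graviton longitudinal projector `𝕃^{ρσ}_{μν}`. -/
def LL (p : Fin 4 → ℝ) (ρ σ μ ν : Fin 4) : ℝ :=
  (1 / (2 * mdot p p)) *
    (δ ρ μ * p σ * lo p ν + δ σ μ * p ρ * lo p ν + δ ρ ν * p σ * lo p μ + δ σ ν * p ρ * lo p μ
      - 2 * η ρ σ * lo p μ * lo p ν)

/-- Graviton identity tensor `𝕀^{ρσ}_{μν}`. -/
def II (ρ σ μ ν : Fin 4) : ℝ := (1 / 2) * (δ ρ μ * δ σ ν + δ σ μ * δ ρ ν)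

/-- Graviton transversal projector `𝕋^{ρσ}_{μν}`. -/
def TT (p : Fin 4 → ℝ) (ρ σ μ ν : Fin 4) : ℝ := II ρ σ μ ν - LL p ρ σ μ ν

/-- The metric `𝔾_{μνρσ}`. -/
def Gmet (p : Fin 4 → ℝ) (μ ν ρ σ : Fin 4) : ℝ :=
  (1 / mdot p p) * (η μ ρ * η ν σ + η μ σ * η ν ρ - η μ ν * η ρ σ)

/-- The inverse metric `𝔾^{μνρσ}`. -/
def GmetInv (p : Fin 4 → ℝ) (μ ν ρ σ : Fin 4) : ℝ :=
  (mdot p p / 4) * (η μ ρ * η ν σ + η μ σ * η ν ρ - η μ ν * η ρ σ)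

/-- Gauge-transformation tensor `𝒢^κ_{μν}`. -/
def Gt (p : Fin 4 → ℝ) (κ μ ν : Fin 4) : ℝ :=
  (1 / mdot p p) * (lo p μ * δ κ ν + lo p ν * δ κ μ)

/-- Gauge-fixing projection tensor `𝓛^{ρσ}_λ`. -/
def Lt (p : Fin 4 → ℝ) (ρ σ lam : Fin 4) : ℝ :=
  (1 / 2) * (p ρ * δ σ lam + p σ * δ ρ lam - lo p lam * η ρ σ)


private lemma eta_symm (a b : Fin 4) : η a b = η b a := by
  unfold η
  rcases eq_or_ne a b with h | h
  · subst h; rfl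
  · simp [h, h.symm]

/-- Numerator of `LL` (no denominator). -/
private def Spoly (p : Fin 4 → ℝ) (ρ σ μ ν : Fin 4) : ℝ :=
  δ ρ μ * p σ * lo p ν + δ σ μ * p ρ * lo p ν + δ ρ ν * p σ * lo p μ + δ σ ν * p ρ * lo p μ
    - 2 * η ρ σ * lo p μ * lo p ν

/-- Numerator of `Gt` (no denominator). -/
private def Tpoly (p : Fin 4 → ℝ) (κ ρ σ : Fin 4) : ℝ :=
  lo p ρ * δ κ σ + lo p σ * δ κ ρ

/-- Twice `Lt`. -/
private def Upoly (p : Fin 4 → ℝ) (ρ σ lam : Fin 4) : ℝ :=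
  p ρ * δ σ lam + p σ * δ ρ lam - lo p lam * η ρ σ

set_option maxHeartbeats 2000000 in
private lemma key1 (p : Fin 4 → ℝ) (μ ν κ : Fin 4) :
    ∑ ρ, ∑ σ, Spoly p ρ σ μ ν * Tpoly p κ ρ σ = 2 * mdot p p * Tpoly p κ μ ν := by
  fin_cases μ <;> fin_cases ν <;> fin_cases κ <;>
    · simp only [Fin.reduceFinMk, Spoly, Tpoly, η, δ, lo, mdot, Fin.sum_univ_four,
        Fin.reduceEq, reduceIte, Fin.isValue]
      ring

set_option maxHeartbeats 2000000 in
private lemma key2 (p : Fin 4 → ℝ) (ρ σ lam : Fin 4) :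
    ∑ μ, ∑ ν, Spoly p ρ σ μ ν * Upoly p μ ν lam = 2 * mdot p p * Upoly p ρ σ lam := by
  fin_cases ρ <;> fin_cases σ <;> fin_cases lam <;>
    · simp only [Fin.reduceFinMk, Spoly, Upoly, η, δ, lo, mdot, Fin.sum_univ_four,
        Fin.reduceEq, reduceIte, Fin.isValue]
      ring

private lemma delta_symm (a b : Fin 4) : δ a b = δ b a := by
  unfold δ
  rcases eq_or_ne a b with h | h
  · subst h; rfl
  · simp [h, h.symm]

private lemma II_swap (a b c d : Fin 4) : II a b c d = II c d a b := by
  unfold II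
  rw [delta_symm a c, delta_symm b d, delta_symm b c, delta_symm a d]
  ring

set_option maxHeartbeats 1000000 in
private lemma II_eigen (X : Fin 4 → Fin 4 → ℝ) (hX : ∀ a b, X a b = X b a) (a b : Fin 4) :
    ∑ x, ∑ y, II x y a b * X x y = X a b := by
  fin_cases a <;> fin_cases b <;>
    · simp only [Fin.reduceFinMk, II, δ, Fin.sum_univ_four, Fin.reduceEq, reduceIte,
        Fin.isValue]
      linarith [hX 0 1, hX 0 2, hX 0 3, hX 1 2, hX 1 3, hX 2 3]

private lemma LL_Gt_eigen (p : Fin 4 → ℝ) (hp : mdot p p ≠ 0) (μ ν κ : Fin 4) :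
    ∑ ρ, ∑ σ, LL p ρ σ μ ν * Gt p κ ρ σ = Gt p κ μ ν := by
  have e : ∀ ρ σ : Fin 4, LL p ρ σ μ ν * Gt p κ ρ σ =
      1 / (2 * mdot p p) * (1 / mdot p p) * (Spoly p ρ σ μ ν * Tpoly p κ ρ σ) := by
    intro ρ σ; unfold LL Gt Spoly Tpoly; ring
  calc ∑ ρ, ∑ σ, LL p ρ σ μ ν * Gt p κ ρ σ
      = 1 / (2 * mdot p p) * (1 / mdot p p) *
          ∑ ρ, ∑ σ, Spoly p ρ σ μ ν * Tpoly p κ ρ σ := by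
        simp only [e, ← Finset.mul_sum]
    _ = 1 / (2 * mdot p p) * (1 / mdot p p) * (2 * mdot p p * Tpoly p κ μ ν) := by
        rw [key1]
    _ = Gt p κ μ ν := by unfold Gt Tpoly; field_simp

private lemma LL_Lt_eigen (p : Fin 4 → ℝ) (hp : mdot p p ≠ 0) (ρ σ lam : Fin 4) :
    ∑ μ, ∑ ν, LL p ρ σ μ ν * Lt p μ ν lam = Lt p ρ σ lam := by
  have e : ∀ μ ν : Fin 4, LL p ρ σ μ ν * Lt p μ ν lam =
      1 / (2 * mdot p p) * (1 / 2) * (Spoly p ρ σ μ ν * Upoly p μ ν lam) := by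
    intro μ ν; unfold LL Lt Spoly Upoly; ring
  calc ∑ μ, ∑ ν, LL p ρ σ μ ν * Lt p μ ν lam
      = 1 / (2 * mdot p p) * (1 / 2) *
          ∑ μ, ∑ ν, Spoly p ρ σ μ ν * Upoly p μ ν lam := by
        simp only [e, ← Finset.mul_sum]
    _ = 1 / (2 * mdot p p) * (1 / 2) * (2 * mdot p p * Upoly p ρ σ lam) := by
        rw [key2]
    _ = Lt p ρ σ lam := by unfold Lt Upoly; field_simp

/-- The tensors `𝒢` and `𝓛` are eigentensors of `𝕃`, `𝕀` and `𝕋` with eigenvalues `1`, `1`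
and `0` respectively. -/
theorem gauge_tensors_are_eigentensors (p : Fin 4 → ℝ) (hp : mdot p p ≠ 0) :
    (∀ μ ν κ : Fin 4, ∑ ρ, ∑ σ, LL p ρ σ μ ν * Gt p κ ρ σ = Gt p κ μ ν) ∧
    (∀ ρ σ lam : Fin 4, ∑ μ, ∑ ν, LL p ρ σ μ ν * Lt p μ ν lam = Lt p ρ σ lam) ∧
    (∀ μ ν κ : Fin 4, ∑ ρ, ∑ σ, II ρ σ μ ν * Gt p κ ρ σ = Gt p κ μ ν) ∧
    (∀ ρ σ lam : Fin 4, ∑ μ, ∑ ν, II ρ σ μ ν * Lt p μ ν lam = Lt p ρ σ lam) ∧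
    (∀ μ ν κ : Fin 4, ∑ ρ, ∑ σ, TT p ρ σ μ ν * Gt p κ ρ σ = 0) ∧
    (∀ ρ σ lam : Fin 4, ∑ μ, ∑ ν, TT p ρ σ μ ν * Lt p μ ν lam = 0) := by
  have h3 : ∀ μ ν κ : Fin 4, ∑ ρ, ∑ σ, II ρ σ μ ν * Gt p κ ρ σ = Gt p κ μ ν :=
    fun μ ν κ => II_eigen (Gt p κ) (fun a b => by unfold Gt; ring) μ ν
  have h4 : ∀ ρ σ lam : Fin 4, ∑ μ, ∑ ν, II ρ σ μ ν * Lt p μ ν lam = Lt p ρ σ lam := by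
    intro ρ σ lam
    refine (Finset.sum_congr rfl fun μ _ => Finset.sum_congr rfl fun ν _ => by
      rw [II_swap]).trans ?_
    exact II_eigen (fun a b => Lt p a b lam)
      (fun a b => by show Lt p a b lam = Lt p b a lam; unfold Lt; rw [eta_symm]; ring) ρ σ
  refine ⟨fun μ ν κ => LL_Gt_eigen p hp μ ν κ, fun ρ σ lam => LL_Lt_eigen p hp ρ σ lam,
    h3, h4, fun μ ν κ => ?_, fun ρ σ lam => ?_⟩
  · simp only [TT, sub_mul, Finset.sum_sub_distrib, LL_Gt_eigen p hp μ ν κ, h3 μ ν κ, sub_self]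
  · simp only [TT, sub_mul, Finset.sum_sub_distrib, LL_Lt_eigen p hp ρ σ lam, h4 ρ σ lam,
      sub_self]
end
end

section
/- For every p ∈ ℝ⁴ with p² ≠ 0, the graviton longitudinal projector with all indices lowered, respectively raised, by the metric 𝔾 decomposes into products of two 𝒢-tensors, respectively two 𝓛-tensors: 𝔾_{μνκλ} 𝕃^{κλ}_{ρσ} = η_{κλ} 𝒢^κ_{μν} 𝒢^λ_{ρσ} and 𝕃^{μν}_{κλ} 𝔾^{κλρσ} = η^{κλ} 𝓛^{μν}_κ 𝓛^{ρσ}_λ, summing over κ, λ. -/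
noncomputable section

lemma forall4 {P : Fin 4 → Prop} (h0 : P 0) (h1 : P 1) (h2 : P 2) (h3 : P 3) : ∀ i, P i := by
  intro i; fin_cases i <;> assumption

lemma eta0t : ∀ τ, η 0 τ = δ 0 τ := forall4 rfl rfl rfl rfl
lemma eta1t : ∀ τ, η 1 τ = -δ 1 τ := by apply forall4 <;> simp [η, δ]
lemma eta2t : ∀ τ, η 2 τ = -δ 2 τ := by apply forall4 <;> simp [η, δ]
lemma eta3t : ∀ τ, η 3 τ = -δ 3 τ := by apply forall4 <;> simp [η, δ]
lemma etat0 : ∀ τ, η τ 0 = δ τ 0 := by apply forall4 <;> simp [η, δ]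
lemma etat1 : ∀ τ, η τ 1 = -δ τ 1 := by apply forall4 <;> simp [η, δ]
lemma etat2 : ∀ τ, η τ 2 = -δ τ 2 := by apply forall4 <;> simp [η, δ]
lemma etat3 : ∀ τ, η τ 3 = -δ τ 3 := by apply forall4 <;> simp [η, δ]

lemma lo_expand (p : Fin 4 → ℝ) : ∀ τ,
    lo p τ = δ 0 τ * p 0 - δ 1 τ * p 1 - δ 2 τ * p 2 - δ 3 τ * p 3 := by
  apply forall4 <;> simp [lo, η, δ, Fin.sum_univ_four]

lemma lo_expand' (p : Fin 4 → ℝ) : ∀ τ,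
    lo p τ = δ τ 0 * p 0 - δ τ 1 * p 1 - δ τ 2 * p 2 - δ τ 3 * p 3 := by
  apply forall4 <;> simp [lo, η, δ, Fin.sum_univ_four]
lemma eta00 : η 0 0 = 1 := rfl
lemma eta01 : η 0 1 = 0 := rfl
lemma eta02 : η 0 2 = 0 := rfl
lemma eta03 : η 0 3 = 0 := rfl
lemma eta10 : η 1 0 = 0 := rfl
lemma eta11 : η 1 1 = -1 := rfl
lemma eta12 : η 1 2 = 0 := rfl
lemma eta13 : η 1 3 = 0 := rfl
lemma eta20 : η 2 0 = 0 := rfl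
lemma eta21 : η 2 1 = 0 := rfl
lemma eta22 : η 2 2 = -1 := rfl
lemma eta23 : η 2 3 = 0 := rfl
lemma eta30 : η 3 0 = 0 := rfl
lemma eta31 : η 3 1 = 0 := rfl
lemma eta32 : η 3 2 = 0 := rfl
lemma eta33 : η 3 3 = -1 := rfl
lemma del00 : δ 0 0 = 1 := rfl
lemma del01 : δ 0 1 = 0 := rfl
lemma del02 : δ 0 2 = 0 := rfl
lemma del03 : δ 0 3 = 0 := rfl
lemma del10 : δ 1 0 = 0 := rfl
lemma del11 : δ 1 1 = 1 := rfl
lemma del12 : δ 1 2 = 0 := rfl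
lemma del13 : δ 1 3 = 0 := rfl
lemma del20 : δ 2 0 = 0 := rfl
lemma del21 : δ 2 1 = 0 := rfl
lemma del22 : δ 2 2 = 1 := rfl
lemma del23 : δ 2 3 = 0 := rfl
lemma del30 : δ 3 0 = 0 := rfl
lemma del31 : δ 3 1 = 0 := rfl
lemma del32 : δ 3 2 = 0 := rfl
lemma del33 : δ 3 3 = 1 := rfl

set_option maxHeartbeats 1600000 in
lemma M (p : Fin 4 → ℝ) (τ : Fin 4) : ∀ μ ν : Fin 4,
    ∑ κ, ∑ lam, Gmet p μ ν κ lam * Lt p κ lam τ = ∑ κ, η κ τ * Gt p κ μ ν := by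
  apply forall4 <;> apply forall4 <;>
    · simp only [Gmet, Lt, Gt, Fin.sum_univ_four,
        eta0t, eta1t, eta2t, eta3t, lo_expand,
        eta00, eta01, eta02, eta03, eta10, eta11, eta12, eta13,
        eta20, eta21, eta22, eta23, eta30, eta31, eta32, eta33,
        del00, del01, del02, del03, del10, del11, del12, del13,
        del20, del21, del22, del23, del30, del31, del32, del33]
      ring

set_option maxHeartbeats 1600000 in
lemma N (p : Fin 4 → ℝ) (hp : mdot p p ≠ 0) (τ : Fin 4) : ∀ ρ σ : Fin 4,
    ∑ κ, ∑ lam, Gt p τ κ lam * GmetInv p κ lam ρ σ = ∑ lam, η τ lam * Lt p ρ σ lam := by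
  apply forall4 <;> apply forall4 <;>
    · simp only [GmetInv, Lt, Gt, Fin.sum_univ_four,
        etat0, etat1, etat2, etat3, lo_expand',
        eta00, eta01, eta02, eta03, eta10, eta11, eta12, eta13,
        eta20, eta21, eta22, eta23, eta30, eta31, eta32, eta33,
        del00, del01, del02, del03, del10, del11, del12, del13,
        del20, del21, del22, del23, del30, del31, del32, del33]
      field_simp
      try ring

lemma K (p : Fin 4 → ℝ) (a b c d : Fin 4) :
    LL p a b c d = ∑ τ, Lt p a b τ * Gt p τ c d := by
  simp only [LL, Lt, Gt, δ, mul_ite, ite_mul, mul_zero, zero_mul, mul_one, one_mul,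
    mul_add, add_mul, mul_sub, sub_mul, Finset.sum_add_distrib, Finset.sum_sub_distrib,
    Finset.sum_ite_eq, Finset.sum_ite_eq', Finset.mem_univ, if_true]
  ring

lemma sum_comm3 (f : Fin 4 → Fin 4 → Fin 4 → ℝ) :
    ∑ a, ∑ b, ∑ c, f a b c = ∑ c, ∑ a, ∑ b, f a b c := by
  rw [show (∑ a, ∑ b, ∑ c, f a b c) = ∑ a, ∑ c, ∑ b, f a b c from
    Finset.sum_congr rfl fun a _ => Finset.sum_comm]
  exact Finset.sum_comm

/-- The graviton longitudinal projector with all indices lowered, respectively raised, by the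
metric `𝔾` decomposes into products of two `𝒢`-tensors, respectively two `𝓛`-tensors. -/
theorem longitudinal_projector_decompositions (p : Fin 4 → ℝ) (hp : mdot p p ≠ 0) :
    (∀ μ ν ρ σ : Fin 4,
      ∑ κ, ∑ lam, Gmet p μ ν κ lam * LL p κ lam ρ σ
        = ∑ κ, ∑ lam, η κ lam * Gt p κ μ ν * Gt p lam ρ σ) ∧
    (∀ μ ν ρ σ : Fin 4,
      ∑ κ, ∑ lam, LL p μ ν κ lam * GmetInv p κ lam ρ σ
        = ∑ κ, ∑ lam, η κ lam * Lt p μ ν κ * Lt p ρ σ lam) := by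
  constructor
  · intro μ ν ρ σ
    calc ∑ κ, ∑ lam, Gmet p μ ν κ lam * LL p κ lam ρ σ
        = ∑ κ, ∑ lam, ∑ τ, Gmet p μ ν κ lam * Lt p κ lam τ * Gt p τ ρ σ := by
          simp only [K, Finset.mul_sum, mul_assoc]
      _ = ∑ τ, ∑ κ, ∑ lam, Gmet p μ ν κ lam * Lt p κ lam τ * Gt p τ ρ σ :=
          sum_comm3 _
      _ = ∑ τ, (∑ κ, ∑ lam, Gmet p μ ν κ lam * Lt p κ lam τ) * Gt p τ ρ σ := by
          simp only [← Finset.sum_mul]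
      _ = ∑ τ, (∑ κ, η κ τ * Gt p κ μ ν) * Gt p τ ρ σ := by
          simp only [M]
      _ = ∑ κ, ∑ lam, η κ lam * Gt p κ μ ν * Gt p lam ρ σ := by
          simp only [Finset.sum_mul]
          rw [Finset.sum_comm]
  · intro μ ν ρ σ
    calc ∑ κ, ∑ lam, LL p μ ν κ lam * GmetInv p κ lam ρ σ
        = ∑ κ, ∑ lam, ∑ τ, Lt p μ ν τ * (Gt p τ κ lam * GmetInv p κ lam ρ σ) := by
          simp only [K, Finset.sum_mul, mul_assoc]
      _ = ∑ τ, ∑ κ, ∑ lam, Lt p μ ν τ * (Gt p τ κ lam * GmetInv p κ lam ρ σ) :=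
          sum_comm3 _
      _ = ∑ τ, Lt p μ ν τ * (∑ κ, ∑ lam, Gt p τ κ lam * GmetInv p κ lam ρ σ) := by
          simp only [Finset.mul_sum]
      _ = ∑ τ, Lt p μ ν τ * (∑ lam, η τ lam * Lt p ρ σ lam) := by
          simp only [N p hp]
      _ = ∑ κ, ∑ lam, η κ lam * Lt p μ ν κ * Lt p ρ σ lam := by
          simp only [Finset.mul_sum]
          exact Finset.sum_congr rfl fun κ _ => Finset.sum_congr rfl fun lam _ => by ring
end
end
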